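/- arXiv:1809.01717 — 3 statements merged into one kernel-verified Lean document; each statement's English description precedes it below -/
import Mathlib

section
/- Let (α*, p*) be a saddle point of A₀[α,p] = α₁·xᵀRy + α₂·xᵀCy over S₂ × (Sₙ × Sₘ), with α* having strictly positive entries, and let p₊ be any Nash equilibrium of the bimatrix game (R,C). Then either x₊ᵀRy₊ ≤ (x*)ᵀRy* or x₊ᵀCy₊ ≤ (x*)ᵀCy*; that is, at least one player's payoff at the minimax relaxation solution p* is at least as large as their payoff at the Nash equilibrium. -/
open Matrix

/-- At a saddle point of the MMR with positive weights, at least one player's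
payoff is at least as large as at any Nash equilibrium. -/
theorem mmr_one_player_optimal (n m : ℕ) (R C : Matrix (Fin n) (Fin m) ℝ)
    (α : Fin 2 → ℝ) (xs xplus : Fin n → ℝ) (yt yplus : Fin m → ℝ)
    (hα : α ∈ stdSimplex ℝ (Fin 2)) (hα0 : 0 < α 0) (hα1 : 0 < α 1)
    (hxs : xs ∈ stdSimplex ℝ (Fin n)) (hyt : yt ∈ stdSimplex ℝ (Fin m))
    (hsaddle₁ : ∀ x ∈ stdSimplex ℝ (Fin n), ∀ y ∈ stdSimplex ℝ (Fin m),
      α 0 * (x ⬝ᵥ R.mulVec y) + α 1 * (x ⬝ᵥ C.mulVec y)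
        ≤ α 0 * (xs ⬝ᵥ R.mulVec yt) + α 1 * (xs ⬝ᵥ C.mulVec yt))
    (hsaddle₂ : ∀ β ∈ stdSimplex ℝ (Fin 2),
      α 0 * (xs ⬝ᵥ R.mulVec yt) + α 1 * (xs ⬝ᵥ C.mulVec yt)
        ≤ β 0 * (xs ⬝ᵥ R.mulVec yt) + β 1 * (xs ⬝ᵥ C.mulVec yt))
    (hxp : xplus ∈ stdSimplex ℝ (Fin n)) (hyp : yplus ∈ stdSimplex ℝ (Fin m))
    (hnash₁ : ∀ x ∈ stdSimplex ℝ (Fin n), x ⬝ᵥ R.mulVec yplus ≤ xplus ⬝ᵥ R.mulVec yplus)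
    (hnash₂ : ∀ y ∈ stdSimplex ℝ (Fin m), xplus ⬝ᵥ C.mulVec y ≤ xplus ⬝ᵥ C.mulVec yplus) :
    xplus ⬝ᵥ R.mulVec yplus ≤ xs ⬝ᵥ R.mulVec yt ∨
      xplus ⬝ᵥ C.mulVec yplus ≤ xs ⬝ᵥ C.mulVec yt := by
  by_contra h
  push_neg at h
  obtain ⟨h1, h2⟩ := h
  have := hsaddle₁ xplus hxp yplus hyp
  nlinarith [mul_lt_mul_of_pos_left h1 hα0, mul_lt_mul_of_pos_left h2 hα1]
end

section
/- Define g(t) = max over q in the unit simplex Δ of ℝ^{nm} of min( t·⟨R,q⟩, (1−t)·⟨C,q⟩ ), for t ∈ [0,1], where R, C have entries in [0,1] and both R and C have at least one strictly positive entry. Then there exists t* ∈ (0,1) and a maximizer q* of g(t*) such that t*·⟨R,q*⟩ = (1−t*)·⟨C,q*⟩ > 0, i.e. the two scaled expected payoffs are balanced and positive at the optimum. -/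
open Matrix

namespace BalOpt

variable {n m : ℕ}

noncomputable def pay (M : Matrix (Fin n) (Fin m) ℝ) (q : Fin n × Fin m → ℝ) : ℝ :=
  ∑ p : Fin n × Fin m, M p.1 p.2 * q p

lemma pay_continuous (M : Matrix (Fin n) (Fin m) ℝ) : Continuous (pay M) := by
  unfold pay
  exact continuous_finset_sum _ fun p _ => continuous_const.mul (continuous_apply p)

lemma pay_comb (M : Matrix (Fin n) (Fin m) ℝ) (a b : ℝ) (q₁ q₂ : Fin n × Fin m → ℝ) :
    pay M (a • q₁ + b • q₂) = a * pay M q₁ + b * pay M q₂ := by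
  unfold pay
  rw [Finset.mul_sum, Finset.mul_sum, ← Finset.sum_add_distrib]
  exact Finset.sum_congr rfl fun p _ => by simp [Pi.add_apply]; ring

lemma pay_nonneg {M : Matrix (Fin n) (Fin m) ℝ} (hM : ∀ i j, 0 ≤ M i j)
    {q : Fin n × Fin m → ℝ} (hq : q ∈ stdSimplex ℝ (Fin n × Fin m)) : 0 ≤ pay M q :=
  Finset.sum_nonneg fun p _ => mul_nonneg (hM p.1 p.2) (hq.1 p)

lemma pay_le {M : Matrix (Fin n) (Fin m) ℝ} {c : ℝ} (hM : ∀ i j, M i j ≤ c)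
    {q : Fin n × Fin m → ℝ} (hq : q ∈ stdSimplex ℝ (Fin n × Fin m)) : pay M q ≤ c := by
  calc pay M q ≤ ∑ p : Fin n × Fin m, c * q p :=
        Finset.sum_le_sum fun p _ => mul_le_mul_of_nonneg_right (hM p.1 p.2) (hq.1 p)
    _ = c := by rw [← Finset.mul_sum, hq.2, mul_one]

lemma pay_ge_single {M : Matrix (Fin n) (Fin m) ℝ} (hM : ∀ i j, 0 ≤ M i j)
    {q : Fin n × Fin m → ℝ} (hq : q ∈ stdSimplex ℝ (Fin n × Fin m)) (p : Fin n × Fin m) :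
    M p.1 p.2 * q p ≤ pay M q :=
  Finset.single_le_sum (fun p' _ => mul_nonneg (hM p'.1 p'.2) (hq.1 p')) (Finset.mem_univ p)

noncomputable def vtx (p : Fin n × Fin m) : Fin n × Fin m → ℝ := fun p' => if p' = p then 1 else 0

lemma vtx_mem (p : Fin n × Fin m) : vtx p ∈ stdSimplex ℝ (Fin n × Fin m) := by
  constructor
  · intro p'; unfold vtx; split <;> norm_num
  · simp [vtx]

lemma pay_vtx (M : Matrix (Fin n) (Fin m) ℝ) (p : Fin n × Fin m) : pay M (vtx p) = M p.1 p.2 := by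
  unfold pay vtx
  simp [mul_ite]

noncomputable def obj (R C : Matrix (Fin n) (Fin m) ℝ) (t : ℝ) (q : Fin n × Fin m → ℝ) : ℝ :=
  min (t * pay R q) ((1 - t) * pay C q)

lemma obj_continuous (R C : Matrix (Fin n) (Fin m) ℝ) :
    Continuous (fun x : ℝ × (Fin n × Fin m → ℝ) => obj R C x.1 x.2) := by
  unfold obj
  exact Continuous.min
    (continuous_fst.mul ((pay_continuous R).comp continuous_snd))
    ((continuous_const.sub continuous_fst).mul ((pay_continuous C).comp continuous_snd))

lemma exists_max (R C : Matrix (Fin n) (Fin m) ℝ) (t : ℝ) (p₀ : Fin n × Fin m) :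
    ∃ q ∈ stdSimplex ℝ (Fin n × Fin m), ∀ q' ∈ stdSimplex ℝ (Fin n × Fin m),
      obj R C t q' ≤ obj R C t q := by
  obtain ⟨q, hq, hmax⟩ := (isCompact_stdSimplex ℝ _).exists_isMaxOn ⟨vtx p₀, vtx_mem p₀⟩
    (((obj_continuous R C).comp (Continuous.prodMk_right t)).continuousOn)
  exact ⟨q, hq, fun q' hq' => hmax hq'⟩

lemma key (R C : Matrix (Fin n) (Fin m) ℝ)
    (hR1 : ∀ i j, R i j ≤ 1) (hRnn : ∀ i j, 0 ≤ R i j) (hCnn : ∀ i j, 0 ≤ C i j)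
    (hCpos : ∃ i j, 0 < C i j) :
    ∃ t ∈ Set.Ioo (0:ℝ) 1, ∃ q ∈ stdSimplex ℝ (Fin n × Fin m),
      (∀ q' ∈ stdSimplex ℝ (Fin n × Fin m), obj R C t q' ≤ obj R C t q) ∧
      t * pay R q ≤ (1 - t) * pay C q := by
  obtain ⟨i₀, j₀, hij₀⟩ := hCpos
  obtain ⟨pm, -, hpm⟩ := Finset.exists_max_image (Finset.univ : Finset (Fin n × Fin m))
    (fun p => C p.1 p.2) ⟨(i₀, j₀), Finset.mem_univ _⟩
  set c : ℝ := C pm.1 pm.2 with hc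
  have hcpos : 0 < c := lt_of_lt_of_le hij₀ (hpm (i₀, j₀) (Finset.mem_univ _))
  have h1c : (0:ℝ) < 1 + c := by linarith
  set t₀ : ℝ := c / (1 + c) with ht₀
  have ht₀mem : t₀ ∈ Set.Ioo (0:ℝ) 1 :=
    ⟨div_pos hcpos h1c, by rw [ht₀, div_lt_one h1c]; linarith⟩
  have hbal : (1 - t₀) * c = t₀ := by rw [ht₀]; field_simp; ring
  obtain ⟨q, hq, hmax⟩ := exists_max R C t₀ pm
  refine ⟨t₀, ht₀mem, q, hq, hmax, ?_⟩
  by_contra hcon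
  push_neg at hcon
  set a := t₀ * pay R q with ha
  set b := (1 - t₀) * pay C q with hb
  have hble : b < a := hcon
  have hbnn : 0 ≤ b := mul_nonneg (by linarith [ht₀mem.2]) (pay_nonneg hCnn hq)
  have hat : a ≤ t₀ := by
    have := pay_le hR1 hq
    nlinarith [ht₀mem.1]
  have hapos : 0 < a := lt_of_le_of_lt hbnn hble
  set ε : ℝ := (a - b) / (2 * a) with hε
  have hεpos : 0 < ε := div_pos (by linarith) (by linarith)
  have hεlt : ε < 1 := by rw [div_lt_one (by positivity)]; linarith
  set q' := (1 - ε) • q + ε • vtx pm with hq'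
  have hq'mem : q' ∈ stdSimplex ℝ (Fin n × Fin m) :=
    convex_stdSimplex ℝ _ hq (vtx_mem pm) (by linarith) (le_of_lt hεpos) (by ring)
  have hRq' : pay R q' = (1 - ε) * pay R q + ε * R pm.1 pm.2 := by
    rw [hq', pay_comb, pay_vtx]
  have hCq' : pay C q' = (1 - ε) * pay C q + ε * c := by
    rw [hq', pay_comb, pay_vtx, hc]
  have hRpmNN : 0 ≤ t₀ * (ε * R pm.1 pm.2) :=
    mul_nonneg (le_of_lt ht₀mem.1) (mul_nonneg (le_of_lt hεpos) (hRnn pm.1 pm.2))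
  have hεa : ε * a = (a - b) / 2 := by
    rw [hε]; field_simp
  have h1 : b < t₀ * pay R q' := by
    rw [hRq']
    have hexp : t₀ * ((1 - ε) * pay R q + ε * R pm.1 pm.2)
        = a - ε * a + t₀ * (ε * R pm.1 pm.2) := by rw [ha]; ring
    rw [hexp, hεa]; linarith
  have h2 : b < (1 - t₀) * pay C q' := by
    rw [hCq']
    have hbt : b < t₀ := lt_of_lt_of_le hble hat
    have hexp : (1 - t₀) * ((1 - ε) * pay C q + ε * c)
        = (1 - ε) * b + ε * ((1 - t₀) * c) := by rw [hb]; ring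
    rw [hexp, hbal]
    nlinarith [mul_pos hεpos (sub_pos.mpr hbt)]
  have : obj R C t₀ q' ≤ obj R C t₀ q := hmax q' hq'mem
  rw [obj, obj, ← ha, ← hb, min_eq_right (le_of_lt hble)] at this
  exact absurd (lt_min h1 h2) (not_lt.mpr this)


end BalOpt


/-- Existence of a balanced positive optimum for the scaled MMR dual. -/
theorem exists_balanced_optimum (n m : ℕ) (R C : Matrix (Fin n) (Fin m) ℝ)
    (hR : ∀ i j, R i j ∈ Set.Icc (0 : ℝ) 1) (hC : ∀ i j, C i j ∈ Set.Icc (0 : ℝ) 1)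
    (hRpos : ∃ i j, 0 < R i j) (hCpos : ∃ i j, 0 < C i j) :
    ∃ t ∈ Set.Ioo (0 : ℝ) 1, ∃ q ∈ stdSimplex ℝ (Fin n × Fin m),
      (∀ q' ∈ stdSimplex ℝ (Fin n × Fin m),
        min (t * ∑ p : Fin n × Fin m, R p.1 p.2 * q' p)
            ((1 - t) * ∑ p : Fin n × Fin m, C p.1 p.2 * q' p)
          ≤ min (t * ∑ p : Fin n × Fin m, R p.1 p.2 * q p)
              ((1 - t) * ∑ p : Fin n × Fin m, C p.1 p.2 * q p)) ∧
      t * (∑ p : Fin n × Fin m, R p.1 p.2 * q p)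
        = (1 - t) * (∑ p : Fin n × Fin m, C p.1 p.2 * q p) ∧
      0 < t * (∑ p : Fin n × Fin m, R p.1 p.2 * q p) := by
  classical
  obtain ⟨iR, jR, hRij⟩ := hRpos
  obtain ⟨iC, jC, hCij⟩ := hCpos
  set pR : Fin n × Fin m := (iR, jR)
  set pC : Fin n × Fin m := (iC, jC)
  have hRnn : ∀ i j, 0 ≤ R i j := fun i j => (hR i j).1
  have hR1 : ∀ i j, R i j ≤ 1 := fun i j => (hR i j).2
  have hCnn : ∀ i j, 0 ≤ C i j := fun i j => (hC i j).1
  have hC1 : ∀ i j, C i j ≤ 1 := fun i j => (hC i j).2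
  -- closedness of the maximizer set
  have hclosedMax : IsClosed {x : ℝ × ((Fin n × Fin m) → ℝ) |
      ∀ q' ∈ stdSimplex ℝ (Fin n × Fin m), BalOpt.obj R C x.1 q' ≤ BalOpt.obj R C x.1 x.2} := by
    have hset : {x : ℝ × ((Fin n × Fin m) → ℝ) |
        ∀ q' ∈ stdSimplex ℝ (Fin n × Fin m), BalOpt.obj R C x.1 q' ≤ BalOpt.obj R C x.1 x.2}
        = ⋂ q' ∈ stdSimplex ℝ (Fin n × Fin m),
            {x : ℝ × ((Fin n × Fin m) → ℝ) | BalOpt.obj R C x.1 q' ≤ BalOpt.obj R C x.1 x.2} := by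
      ext x; simp
    rw [hset]
    refine isClosed_biInter fun q' _ => isClosed_le ?_ ?_
    · exact (BalOpt.obj_continuous R C).comp (continuous_fst.prodMk continuous_const)
    · exact BalOpt.obj_continuous R C
  have hcontA : Continuous fun x : ℝ × ((Fin n × Fin m) → ℝ) => x.1 * BalOpt.pay R x.2 :=
    continuous_fst.mul ((BalOpt.pay_continuous R).comp continuous_snd)
  have hcontB : Continuous fun x : ℝ × ((Fin n × Fin m) → ℝ) => (1 - x.1) * BalOpt.pay C x.2 :=
    (continuous_const.sub continuous_fst).mul ((BalOpt.pay_continuous C).comp continuous_snd)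
  set KA : Set (ℝ × ((Fin n × Fin m) → ℝ)) :=
    (Set.Icc (0:ℝ) 1 ×ˢ stdSimplex ℝ (Fin n × Fin m)) ∩
      ({x | ∀ q' ∈ stdSimplex ℝ (Fin n × Fin m), BalOpt.obj R C x.1 q' ≤ BalOpt.obj R C x.1 x.2} ∩
       {x | x.1 * BalOpt.pay R x.2 ≤ (1 - x.1) * BalOpt.pay C x.2}) with hKA
  set KB : Set (ℝ × ((Fin n × Fin m) → ℝ)) :=
    (Set.Icc (0:ℝ) 1 ×ˢ stdSimplex ℝ (Fin n × Fin m)) ∩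
      ({x | ∀ q' ∈ stdSimplex ℝ (Fin n × Fin m), BalOpt.obj R C x.1 q' ≤ BalOpt.obj R C x.1 x.2} ∩
       {x | (1 - x.1) * BalOpt.pay C x.2 ≤ x.1 * BalOpt.pay R x.2}) with hKB
  have hKAcpt : IsCompact KA :=
    ((isCompact_Icc).prod (isCompact_stdSimplex ℝ _)).inter_right
      (hclosedMax.inter (isClosed_le hcontA hcontB))
  have hKBcpt : IsCompact KB :=
    ((isCompact_Icc).prod (isCompact_stdSimplex ℝ _)).inter_right
      (hclosedMax.inter (isClosed_le hcontB hcontA))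
  set AA : Set ℝ := Prod.fst '' KA with hAA
  set AB : Set ℝ := Prod.fst '' KB with hAB
  have hAAclosed : IsClosed AA := (hKAcpt.image continuous_fst).isClosed
  have hABclosed : IsClosed AB := (hKBcpt.image continuous_fst).isClosed
  -- cover
  have hcover : Set.Ioo (0:ℝ) 1 ⊆ AA ∪ AB := by
    intro t ht
    obtain ⟨q, hq, hmax⟩ := BalOpt.exists_max R C t pR
    have hmem : (t, q) ∈ Set.Icc (0:ℝ) 1 ×ˢ stdSimplex ℝ (Fin n × Fin m) :=
      ⟨⟨le_of_lt ht.1, le_of_lt ht.2⟩, hq⟩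
    rcases le_total (t * BalOpt.pay R q) ((1 - t) * BalOpt.pay C q) with h | h
    · exact Or.inl ⟨(t, q), ⟨hmem, hmax, h⟩, rfl⟩
    · exact Or.inr ⟨(t, q), ⟨hmem, hmax, h⟩, rfl⟩
  -- nonemptiness of AA
  have hneA : (Set.Ioo (0:ℝ) 1 ∩ AA).Nonempty := by
    obtain ⟨t₀, ht₀, q, hq, hmax, hle⟩ := BalOpt.key R C hR1 hRnn hCnn ⟨iC, jC, hCij⟩
    exact ⟨t₀, ht₀, (t₀, q), ⟨⟨⟨le_of_lt ht₀.1, le_of_lt ht₀.2⟩, hq⟩, hmax, hle⟩, rfl⟩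
  -- nonemptiness of AB, via symmetry
  have hswap : ∀ (t : ℝ) (q : (Fin n × Fin m) → ℝ),
      BalOpt.obj R C (1 - t) q = BalOpt.obj C R t q := by
    intro t q
    unfold BalOpt.obj
    rw [min_comm]
    norm_num
  have hneB : (Set.Ioo (0:ℝ) 1 ∩ AB).Nonempty := by
    obtain ⟨t', ht', q, hq, hmax, hle⟩ := BalOpt.key C R hC1 hCnn hRnn ⟨iR, jR, hRij⟩
    have hIcc : (1 - t') ∈ Set.Icc (0:ℝ) 1 := ⟨by linarith [ht'.2], by linarith [ht'.1]⟩
    refine ⟨1 - t', ⟨by linarith [ht'.2], by linarith [ht'.1]⟩, (1 - t', q),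
      ⟨⟨hIcc, hq⟩, ?_, ?_⟩, rfl⟩
    · intro q' hq'
      rw [hswap t' q', hswap t' q]
      exact hmax q' hq'
    · show (1 - (1 - t')) * BalOpt.pay C q ≤ (1 - t') * BalOpt.pay R q
      have h1 : 1 - (1 - t') = t' := by ring
      rw [h1]
      exact hle
  -- connectedness
  obtain ⟨t, htIoo, htAA, htAB⟩ :=
    isPreconnected_closed_iff.mp isPreconnected_Ioo AA AB hAAclosed hABclosed hcover hneA hneB
  obtain ⟨x₁, hx₁, hx₁t⟩ := htAA
  obtain ⟨x₂, hx₂, hx₂t⟩ := htAB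
  set q₁ := x₁.2 with hq₁def
  set q₂ := x₂.2 with hq₂def
  rw [hKA] at hx₁
  rw [hKB] at hx₂
  have hq₁mem : q₁ ∈ stdSimplex ℝ (Fin n × Fin m) := hx₁.1.2
  have hq₂mem : q₂ ∈ stdSimplex ℝ (Fin n × Fin m) := hx₂.1.2
  have hmax₁ : ∀ q' ∈ stdSimplex ℝ (Fin n × Fin m), BalOpt.obj R C t q' ≤ BalOpt.obj R C t q₁ := by
    have h := hx₁.2.1; simp only [Set.mem_setOf_eq] at h; rw [hx₁t] at h; exact h
  have hmax₂ : ∀ q' ∈ stdSimplex ℝ (Fin n × Fin m), BalOpt.obj R C t q' ≤ BalOpt.obj R C t q₂ := by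
    have h := hx₂.2.1; simp only [Set.mem_setOf_eq] at h; rw [hx₂t] at h; exact h
  have hle₁ : t * BalOpt.pay R q₁ ≤ (1 - t) * BalOpt.pay C q₁ := by
    have h := hx₁.2.2; simp only [Set.mem_setOf_eq] at h; rw [hx₁t] at h; exact h
  have hle₂ : (1 - t) * BalOpt.pay C q₂ ≤ t * BalOpt.pay R q₂ := by
    have h := hx₂.2.2; simp only [Set.mem_setOf_eq] at h; rw [hx₂t] at h; exact h
  set a₁ := t * BalOpt.pay R q₁ with ha₁
  set b₁ := (1 - t) * BalOpt.pay C q₁ with hb₁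
  set a₂ := t * BalOpt.pay R q₂ with ha₂
  set b₂ := (1 - t) * BalOpt.pay C q₂ with hb₂
  set d₁ := b₁ - a₁ with hd₁
  set d₂ := a₂ - b₂ with hd₂
  have hd₁nn : 0 ≤ d₁ := by rw [hd₁]; linarith
  have hd₂nn : 0 ≤ d₂ := by rw [hd₂]; linarith
  set s : ℝ := if d₁ + d₂ = 0 then 0 else d₁ / (d₁ + d₂) with hs
  have hsum_nn : 0 ≤ d₁ + d₂ := by linarith
  have hs0 : 0 ≤ s := by
    rw [hs]; split
    · exact le_rfl
    · rename_i h
      exact div_nonneg hd₁nn hsum_nn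
  have hs1 : s ≤ 1 := by
    rw [hs]; split
    · linarith
    · rename_i h
      rw [div_le_one (lt_of_le_of_ne hsum_nn (Ne.symm h))]
      linarith
  have hbal : (1 - s) * d₁ = s * d₂ := by
    rw [hs]; split
    · rename_i h
      have hd0 : d₁ = 0 := by linarith
      simp [hd0]
    · rename_i h
      have hpos : 0 < d₁ + d₂ := lt_of_le_of_ne hsum_nn (Ne.symm h)
      field_simp
      ring
  rw [hd₁, hd₂] at hbal
  set qs := (1 - s) • q₁ + s • q₂ with hqs
  have hqsmem : qs ∈ stdSimplex ℝ (Fin n × Fin m) :=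
    convex_stdSimplex ℝ _ hq₁mem hq₂mem (by linarith) hs0 (by ring)
  have hAs : t * BalOpt.pay R qs = (1 - s) * a₁ + s * a₂ := by
    rw [hqs, BalOpt.pay_comb, ha₁, ha₂]; ring
  have hBs : (1 - t) * BalOpt.pay C qs = (1 - s) * b₁ + s * b₂ := by
    rw [hqs, BalOpt.pay_comb, hb₁, hb₂]; ring
  have heq : t * BalOpt.pay R qs = (1 - t) * BalOpt.pay C qs := by
    rw [hAs, hBs]
    linear_combination -hbal
  have ho₁ : BalOpt.obj R C t q₁ = a₁ := min_eq_left hle₁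
  have ho₂ : BalOpt.obj R C t q₂ = b₂ := min_eq_right hle₂
  have hmaxs : ∀ q' ∈ stdSimplex ℝ (Fin n × Fin m),
      BalOpt.obj R C t q' ≤ BalOpt.obj R C t qs := by
    intro q' hq'
    have h₁ : BalOpt.obj R C t q' ≤ a₁ := ho₁ ▸ hmax₁ q' hq'
    have h₂ : BalOpt.obj R C t q' ≤ b₂ := ho₂ ▸ hmax₂ q' hq'
    have hcomb : (1 - s) * BalOpt.obj R C t q' + s * BalOpt.obj R C t q'
        = BalOpt.obj R C t q' := by ring
    refine le_min ?_ ?_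
    · rw [hAs]
      have e₁ : (1 - s) * BalOpt.obj R C t q' ≤ (1 - s) * a₁ :=
        mul_le_mul_of_nonneg_left h₁ (by linarith)
      have e₂ : s * BalOpt.obj R C t q' ≤ s * a₂ :=
        mul_le_mul_of_nonneg_left (le_trans h₂ hle₂) hs0
      linarith
    · rw [hBs]
      have e₁ : (1 - s) * BalOpt.obj R C t q' ≤ (1 - s) * b₁ :=
        mul_le_mul_of_nonneg_left (le_trans h₁ hle₁) (by linarith)
      have e₂ : s * BalOpt.obj R C t q' ≤ s * b₂ :=
        mul_le_mul_of_nonneg_left h₂ hs0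
      linarith
  -- positivity
  set q0 : (Fin n × Fin m) → ℝ := (1/2 : ℝ) • BalOpt.vtx pR + (1/2 : ℝ) • BalOpt.vtx pC with hq0
  have hq0mem : q0 ∈ stdSimplex ℝ (Fin n × Fin m) :=
    convex_stdSimplex ℝ _ (BalOpt.vtx_mem pR) (BalOpt.vtx_mem pC) (by norm_num) (by norm_num)
      (by norm_num)
  have hpayR0 : BalOpt.pay R q0 = (1/2) * R iR jR + (1/2) * R iC jC := by
    rw [hq0, BalOpt.pay_comb, BalOpt.pay_vtx, BalOpt.pay_vtx]
  have hpayC0 : BalOpt.pay C q0 = (1/2) * C iR jR + (1/2) * C iC jC := by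
    rw [hq0, BalOpt.pay_comb, BalOpt.pay_vtx, BalOpt.pay_vtx]
  have hq0pos : 0 < BalOpt.obj R C t q0 := by
    refine lt_min ?_ ?_
    · rw [hpayR0]
      have := hRnn iC jC
      nlinarith [htIoo.1]
    · rw [hpayC0]
      have := hCnn iR jR
      have h1t : 0 < 1 - t := by linarith [htIoo.2]
      nlinarith
  have hposs : 0 < t * BalOpt.pay R qs := by
    have h1 : BalOpt.obj R C t q0 ≤ BalOpt.obj R C t qs := hmaxs q0 hq0mem
    have h2 : BalOpt.obj R C t qs ≤ t * BalOpt.pay R qs := min_le_left _ _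
    linarith
  exact ⟨t, htIoo, qs, hqsmem, hmaxs, heq, hposs⟩
end

section
/- Let (α*, p*) be a saddle point of A₀[α,p] = α₁ xᵀRy + α₂ xᵀCy over S₂ × (Sₙ × Sₘ) with α₁*, α₂* > 0, and let p₊ be a Nash equilibrium of (R,C). If Row's MMR payoff is strictly worse than at the Nash equilibrium, i.e. (x*)ᵀRy* < x₊ᵀRy₊, then Column's MMR payoff strictly exceeds its Nash payoff: (x*)ᵀCy* > x₊ᵀCy₊. -/
open Matrix

/-- If at a positive-weight MMR saddle point Row's payoff is strictly worse than
at a Nash equilibrium, then Column's payoff strictly exceeds its Nash payoff. -/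
theorem row_deficit_forces_column_surplus (n m : ℕ) (R C : Matrix (Fin n) (Fin m) ℝ)
    (α : Fin 2 → ℝ) (xs xplus : Fin n → ℝ) (yt yplus : Fin m → ℝ)
    (hα : α ∈ stdSimplex ℝ (Fin 2)) (hα0 : 0 < α 0) (hα1 : 0 < α 1)
    (hxs : xs ∈ stdSimplex ℝ (Fin n)) (hyt : yt ∈ stdSimplex ℝ (Fin m))
    (hsaddle₁ : ∀ x ∈ stdSimplex ℝ (Fin n), ∀ y ∈ stdSimplex ℝ (Fin m),
      α 0 * (x ⬝ᵥ R.mulVec y) + α 1 * (x ⬝ᵥ C.mulVec y)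
        ≤ α 0 * (xs ⬝ᵥ R.mulVec yt) + α 1 * (xs ⬝ᵥ C.mulVec yt))
    (hsaddle₂ : ∀ β ∈ stdSimplex ℝ (Fin 2),
      α 0 * (xs ⬝ᵥ R.mulVec yt) + α 1 * (xs ⬝ᵥ C.mulVec yt)
        ≤ β 0 * (xs ⬝ᵥ R.mulVec yt) + β 1 * (xs ⬝ᵥ C.mulVec yt))
    (hxp : xplus ∈ stdSimplex ℝ (Fin n)) (hyp : yplus ∈ stdSimplex ℝ (Fin m))
    (hnash₁ : ∀ x ∈ stdSimplex ℝ (Fin n), x ⬝ᵥ R.mulVec yplus ≤ xplus ⬝ᵥ R.mulVec yplus)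
    (hnash₂ : ∀ y ∈ stdSimplex ℝ (Fin m), xplus ⬝ᵥ C.mulVec y ≤ xplus ⬝ᵥ C.mulVec yplus)
    (hdef : xs ⬝ᵥ R.mulVec yt < xplus ⬝ᵥ R.mulVec yplus) :
    xplus ⬝ᵥ C.mulVec yplus < xs ⬝ᵥ C.mulVec yt := by
  have h := hsaddle₁ xplus hxp yplus hyp
  nlinarith [hα0, hα1, hdef, h]
end
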